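/- arXiv:0804.3070 — 2 statements merged into one kernel-verified Lean document; each statement's English description precedes it below -/
import Mathlib

section
/- For all s ≥ 1 and λ ≥ 1, with μ_ℓ(s) := 2(s−1)^ℓ/(s+1)^{ℓ+1} (convention 0^0 = 1), one has Σ_{ℓ=0}^∞ |μ_ℓ(s) − μ_ℓ(λs)| ≤ 2(λ−1)/(λ+1), with equality when s = 1. -/
/-- Eigenvalue sequence (in the Fock basis) of the single-mode thermal Gaussian state with
covariance matrix `s·1₂`: `μ_ℓ(s) = 2(s-1)^ℓ/(s+1)^{ℓ+1}` (with `0^0 = 1`). -/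
noncomputable def thermalEigenvalue (s : ℝ) (ℓ : ℕ) : ℝ :=
  2 * (s - 1) ^ ℓ / (s + 1) ^ (ℓ + 1)

lemma auxC (p q : ℝ) (hp0 : 0 ≤ p) (hp1 : p ≤ 1) (hq0 : 0 ≤ q) (hq1 : q ≤ 1) :
    ∀ n : ℕ, p ^ n - p ^ n * (q * q ^ n) - p * p ^ n * q + p * p ^ n * (q * q ^ n) ≤ 1 - q := by
  intro n
  induction n with
  | zero => simp
  | succ n ih =>
    rw [pow_succ, pow_succ]
    have h1 : 0 ≤ p ^ n := pow_nonneg hp0 n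
    have h2 : 0 ≤ q ^ n := pow_nonneg hq0 n
    have h3 : p ^ n ≤ 1 := pow_le_one₀ hp0 hp1
    have h4 : q ^ n ≤ 1 := pow_le_one₀ hq0 hq1
    have h5 : p * p ^ n ≤ 1 := mul_le_one₀ hp1 h1 h3
    have h6 : q * q ^ n ≤ 1 := mul_le_one₀ hq1 h2 h4
    have h7 : p * p ^ n * (q * q ^ n) ≤ 1 := mul_le_one₀ h5 (mul_nonneg hq0 h2) h6
    nlinarith [mul_le_mul_of_nonneg_left ih hp0,
      mul_nonneg (mul_nonneg (sub_nonneg.2 hp1) (sub_nonneg.2 hq1)) (sub_nonneg.2 h7)]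

lemma auxB (p q r : ℝ) (hp0 : 0 ≤ p) (hp1 : p ≤ 1) (hq0 : 0 ≤ q) (hq1 : q ≤ 1)
    (hr : 0 ≤ r) (hrel : q - p = r * (1 - p * q)) :
    ∀ n : ℕ, q ^ n - p ^ n ≤ r * (1 - p ^ n * q ^ n) := by
  intro n
  induction n with
  | zero => simp
  | succ n ih =>
    rw [pow_succ, pow_succ]
    have h1 : 0 ≤ p ^ n := pow_nonneg hp0 n
    have h2 : 0 ≤ q ^ n := pow_nonneg hq0 n
    have hC := auxC p q hp0 hp1 hq0 hq1 n
    nlinarith [mul_le_mul_of_nonneg_left ih hq0,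
      mul_le_mul_of_nonneg_left hC hr,
      mul_le_mul_of_nonneg_left hrel.le h1,
      mul_le_mul_of_nonneg_left hrel.ge h1]

lemma geom_partial (p : ℝ) (k : ℕ) :
    ∑ i ∈ Finset.range k, (1 - p) * p ^ i = 1 - p ^ k := by
  have h := geom_sum_mul p k
  calc ∑ i ∈ Finset.range k, (1 - p) * p ^ i
      = -((∑ i ∈ Finset.range k, p ^ i) * (p - 1)) := by
        rw [Finset.sum_mul, ← Finset.sum_neg_distrib]
        exact Finset.sum_congr rfl fun i _ => by ring
    _ = 1 - p ^ k := by rw [h]; ring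

lemma tv_bound (p q r : ℝ) (hp0 : 0 ≤ p) (hp1 : p < 1) (hq0 : 0 ≤ q) (hq1 : q < 1)
    (hpq : p ≤ q) (hr : 0 ≤ r) (hrel : q - p = r * (1 - p * q)) :
    ∑' ℓ : ℕ, |(1 - p) * p ^ ℓ - (1 - q) * q ^ ℓ| ≤ 2 * r := by
  set d : ℕ → ℝ := fun ℓ => (1 - p) * p ^ ℓ - (1 - q) * q ^ ℓ with hd_def
  have ha : Summable fun ℓ : ℕ => (1 - p) * p ^ ℓ :=
    (summable_geometric_of_lt_one hp0 hp1).mul_left _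
  have hb : Summable fun ℓ : ℕ => (1 - q) * q ^ ℓ :=
    (summable_geometric_of_lt_one hq0 hq1).mul_left _
  have hta : ∑' ℓ : ℕ, (1 - p) * p ^ ℓ = 1 := by
    rw [tsum_mul_left, tsum_geometric_of_lt_one hp0 hp1]
    field_simp [show (1:ℝ) - p ≠ 0 by linarith]
  have htb : ∑' ℓ : ℕ, (1 - q) * q ^ ℓ = 1 := by
    rw [tsum_mul_left, tsum_geometric_of_lt_one hq0 hq1]
    field_simp [show (1:ℝ) - q ≠ 0 by linarith]
  have hd : Summable d := ha.sub hb
  have htd : ∑' ℓ, d ℓ = 0 := by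
    rw [hd_def, Summable.tsum_sub ha hb, hta, htb]; ring
  have hdabs : Summable fun ℓ => |d ℓ| := hd.abs
  by_cases hall : ∀ ℓ, 0 ≤ d ℓ
  · have : ∑' ℓ, |d ℓ| = ∑' ℓ, d ℓ :=
      tsum_congr fun ℓ => abs_of_nonneg (hall ℓ)
    rw [this, htd]
    positivity
  · push_neg at hall
    set k := Nat.find hall with hk_def
    have hk : d k < 0 := Nat.find_spec hall
    have hpos : ∀ ℓ < k, 0 ≤ d ℓ := fun ℓ hℓ => le_of_not_gt (Nat.find_min hall hℓ)
    have hneg : ∀ ℓ, k ≤ ℓ → d ℓ ≤ 0 := by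
      intro ℓ hℓ
      induction ℓ, hℓ using Nat.le_induction with
      | base => exact hk.le
      | succ m hm ih =>
        have h2 : 0 ≤ (1 - q) * q ^ m := by
          apply mul_nonneg (by linarith) (pow_nonneg hq0 m)
        have := mul_le_mul_of_nonneg_left (a := p) (by simpa [hd_def, sub_nonpos] using ih) hp0
        simp only [hd_def, sub_nonpos]
        rw [pow_succ, pow_succ]
        nlinarith
    have hsplit1 := Summable.sum_add_tsum_nat_add (f := fun ℓ => |d ℓ|) k hdabs
    have hsplit2 := Summable.sum_add_tsum_nat_add (f := d) k hd
    rw [htd] at hsplit2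
    have e1 : ∑ i ∈ Finset.range k, |d i| = ∑ i ∈ Finset.range k, d i :=
      Finset.sum_congr rfl fun i hi => abs_of_nonneg (hpos i (Finset.mem_range.mp hi))
    have e2 : ∑' i : ℕ, |d (i + k)| = -∑' i : ℕ, d (i + k) := by
      rw [← tsum_neg]
      exact tsum_congr fun i => abs_of_nonpos (hneg (i + k) (Nat.le_add_left k i))
    have e3 : ∑ i ∈ Finset.range k, d i = q ^ k - p ^ k := by
      simp only [hd_def]
      rw [Finset.sum_sub_distrib, geom_partial p k, geom_partial q k]
      ring
    have hfinal : ∑' ℓ, |d ℓ| = 2 * (q ^ k - p ^ k) := by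
      rw [← hsplit1, e1, e2]
      have : ∑' i : ℕ, d (i + k) = -(q ^ k - p ^ k) := by
        rw [e3] at hsplit2; linarith
      rw [this, e3]; ring
    rw [hfinal]
    have hB := auxB p q r hp0 hp1.le hq0 hq1.le hr hrel k
    nlinarith [mul_nonneg (mul_nonneg (pow_nonneg hp0 k) (pow_nonneg hq0 k)) hr]

lemma thermal_eq (s : ℝ) (hs : 1 ≤ s) (ℓ : ℕ) :
    thermalEigenvalue s ℓ = (1 - (s - 1) / (s + 1)) * ((s - 1) / (s + 1)) ^ ℓ := by
  have h : (0:ℝ) < s + 1 := by linarith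
  rw [thermalEigenvalue, div_pow, pow_succ]
  field_simp
  ring

/-- For `s, λ ≥ 1`, the trace-norm distance between the thermal states with
covariance matrices `s·1₂` and `λs·1₂` is at most `2(λ-1)/(λ+1)`, with equality when `s = 1`. -/
theorem thermal_trace_distance_le (s lam : ℝ) (hs : 1 ≤ s) (hlam : 1 ≤ lam) :
    (∑' ℓ : ℕ, |thermalEigenvalue s ℓ - thermalEigenvalue (lam * s) ℓ|
        ≤ 2 * (lam - 1) / (lam + 1))
    ∧ (s = 1 →
      ∑' ℓ : ℕ, |thermalEigenvalue s ℓ - thermalEigenvalue (lam * s) ℓ|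
        = 2 * (lam - 1) / (lam + 1)) := by
  have hls : 1 ≤ lam * s := by nlinarith
  have hs1 : (0:ℝ) < s + 1 := by linarith
  have hls1 : (0:ℝ) < lam * s + 1 := by linarith
  have hl1 : (0:ℝ) < lam + 1 := by linarith
  set p : ℝ := (s - 1) / (s + 1) with hp_def
  set q : ℝ := (lam * s - 1) / (lam * s + 1) with hq_def
  set r : ℝ := (lam - 1) / (lam + 1) with hr_def
  have hp0 : 0 ≤ p := div_nonneg (by linarith) hs1.le
  have hp1 : p < 1 := (div_lt_one hs1).2 (by linarith)
  have hq0 : 0 ≤ q := div_nonneg (by linarith) hls1.le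
  have hq1 : q < 1 := (div_lt_one hls1).2 (by linarith)
  have hpq : p ≤ q := by
    rw [hp_def, hq_def, div_le_div_iff₀ hs1 hls1]
    nlinarith
  have hr0 : 0 ≤ r := div_nonneg (by linarith) hl1.le
  have hrel : q - p = r * (1 - p * q) := by
    rw [hp_def, hq_def, hr_def]
    field_simp
    ring
  have hrw : (fun ℓ : ℕ => |thermalEigenvalue s ℓ - thermalEigenvalue (lam * s) ℓ|)
      = fun ℓ : ℕ => |(1 - p) * p ^ ℓ - (1 - q) * q ^ ℓ| := by
    funext ℓ
    rw [thermal_eq s hs ℓ, thermal_eq (lam * s) hls ℓ]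
  have hRHS : 2 * (lam - 1) / (lam + 1) = 2 * r := by
    rw [hr_def]; ring
  constructor
  · rw [hrw, hRHS]
    exact tv_bound p q r hp0 hp1 hq0 hq1 hpq hr0 hrel
  · intro hs1'
    subst hs1'
    have hp' : p = 0 := by rw [hp_def]; norm_num
    have hqr : q = r := by rw [hq_def, hr_def]; norm_num
    rw [hrw, hRHS, hp', hqr]
    have hb : Summable fun ℓ : ℕ => (1 - r) * r ^ ℓ :=
      (summable_geometric_of_lt_one hr0 (hqr ▸ hq1)).mul_left _
    have hsum : Summable fun ℓ : ℕ => |(1 - (0:ℝ)) * 0 ^ ℓ - (1 - r) * r ^ ℓ| := by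
      apply Summable.abs
      exact ((summable_geometric_of_lt_one le_rfl one_pos).mul_left _).sub hb
    rw [Summable.tsum_eq_zero_add hsum]
    have e0 : |(1 - (0:ℝ)) * 0 ^ 0 - (1 - r) * r ^ 0| = r := by
      simp [abs_of_nonneg hr0]
    have en : (fun n : ℕ => |(1 - (0:ℝ)) * 0 ^ (n + 1) - (1 - r) * r ^ (n + 1)|)
        = fun n : ℕ => (1 - r) * r * r ^ n := by
      funext n
      have hr1 : r < 1 := hqr ▸ hq1
      simp only [zero_pow (Nat.succ_ne_zero n), mul_zero, zero_sub, abs_neg]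
      rw [abs_of_nonneg (mul_nonneg (by linarith : (0:ℝ) ≤ 1 - r) (pow_nonneg hr0 _)),
        pow_succ]
      ring
    rw [e0, en, tsum_mul_left, tsum_geometric_of_lt_one hr0 (hqr ▸ hq1)]
    have hr1 : r < 1 := hqr ▸ hq1
    field_simp [show (1:ℝ) - r ≠ 0 by linarith]
    ring
end

section
/- For all s ≥ 1 and λ ≥ 1, with μ_ℓ(s) := 2(s−1)^ℓ/(s+1)^{ℓ+1} (convention 0^0 = 1), the Kullback–Leibler divergence satisfies Σ_{ℓ=0}^∞ μ_ℓ(s) · log( μ_ℓ(s)/μ_ℓ(λs) ) ≤ log( (1+λ)/2 ), with equality at s = 1. (Terms with μ_ℓ(s) = 0 are read as 0.) -/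
/-!
For `s > 1` the sequence `μ_•(s)` is the geometric distribution `(1 - t) tˡ` with ratio
`t = (s - 1)/(s + 1)`, and the relative entropy of two geometric distributions has the closed form
`log ((1 - t)/(1 - u)) + t/(1 - t) · log (t/u)`. Bounding both logarithms by `log x ≤ x - 1`
reduces the claim to a polynomial inequality in `s` and `λ`. At `s = 1` the sequence is the point
mass at `0`, and the divergence is exactly `-log μ_0(λ) = log ((1 + λ)/2)`.
-/

open Real

theorem hasSum_mul_log_div_geometric {t u : ℝ} (ht0 : 0 < t) (ht1 : t < 1) (hu0 : 0 < u)
    (hu1 : u < 1) :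
    HasSum (fun n : ℕ => (1 - t) * t ^ n * log ((1 - t) * t ^ n / ((1 - u) * u ^ n)))
      (log ((1 - t) / (1 - u)) + t / (1 - t) * log (t / u)) := by
  have ht : 1 - t ≠ 0 := (sub_pos.2 ht1).ne'
  have hterm : ∀ n : ℕ, (1 - t) * t ^ n * log ((1 - t) * t ^ n / ((1 - u) * u ^ n))
      = log ((1 - t) / (1 - u)) * ((1 - t) * t ^ n) + (1 - t) * log (t / u) * (n * t ^ n) := by
    intro n
    have hu : 0 < 1 - u := sub_pos.2 hu1
    rw [mul_div_mul_comm, ← div_pow, log_mul (by positivity) (by positivity), log_pow]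
    ring
  have hgeom := hasSum_geometric_of_lt_one ht0.le ht1
  have harith := hasSum_coe_mul_geometric_of_norm_lt_one (by rwa [norm_of_nonneg ht0.le])
  have hvalue : log ((1 - t) / (1 - u)) + t / (1 - t) * log (t / u)
      = log ((1 - t) / (1 - u)) * ((1 - t) * (1 - t)⁻¹)
        + (1 - t) * log (t / u) * (t / (1 - t) ^ 2) := by
    field_simp
  simp_rw [hterm, hvalue]
  exact ((hgeom.mul_left (1 - t)).mul_left _).add (harith.mul_left _)

noncomputable def thermalRatio (s : ℝ) : ℝ := (s - 1) / (s + 1)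

theorem thermalRatio_pos {s : ℝ} (hs : 1 < s) : 0 < thermalRatio s :=
  div_pos (by linarith) (by linarith)

theorem thermalRatio_lt_one {s : ℝ} (hs : -1 < s) : thermalRatio s < 1 :=
  (div_lt_one (by linarith)).2 (by linarith)

theorem one_sub_thermalRatio {s : ℝ} (hs : s + 1 ≠ 0) : 1 - thermalRatio s = 2 / (s + 1) := by
  rw [thermalRatio]
  field_simp
  ring

theorem thermalEigenvalue_eq_geometric {s : ℝ} (hs : s + 1 ≠ 0) (ℓ : ℕ) :
    thermalEigenvalue s ℓ = (1 - thermalRatio s) * thermalRatio s ^ ℓ := by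
  rw [one_sub_thermalRatio hs, thermalRatio, thermalEigenvalue, div_pow, pow_succ]
  field_simp

theorem hasSum_thermalEigenvalue_mul_log_div {s s' : ℝ} (hs : 1 < s) (hs' : 1 < s') :
    HasSum
      (fun ℓ : ℕ => thermalEigenvalue s ℓ * log (thermalEigenvalue s ℓ / thermalEigenvalue s' ℓ))
      (log ((s' + 1) / (s + 1)) + (s - 1) / 2 * log (thermalRatio s / thermalRatio s')) := by
  have hs1 : s + 1 ≠ 0 := by linarith
  have hs1' : s' + 1 ≠ 0 := by linarith
  simp_rw [thermalEigenvalue_eq_geometric hs1, thermalEigenvalue_eq_geometric hs1']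
  convert hasSum_mul_log_div_geometric (thermalRatio_pos hs) (thermalRatio_lt_one (by linarith))
    (thermalRatio_pos hs') (thermalRatio_lt_one (by linarith)) using 3
  · rw [one_sub_thermalRatio hs1, one_sub_thermalRatio hs1']
    field_simp
  · rw [one_sub_thermalRatio hs1, thermalRatio]
    field_simp

theorem tsum_thermalEigenvalue_one_mul_log_div (lam : ℝ) :
    ∑' ℓ : ℕ, thermalEigenvalue 1 ℓ * log (thermalEigenvalue 1 ℓ / thermalEigenvalue lam ℓ)
      = log ((1 + lam) / 2) := by
  have hpoint : ∀ ℓ ≠ 0, thermalEigenvalue 1 ℓ = 0 := fun ℓ hℓ => by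
    simp [thermalEigenvalue, zero_pow hℓ]
  rw [tsum_eq_single 0 fun ℓ hℓ => by rw [hpoint ℓ hℓ, zero_mul]]
  norm_num [thermalEigenvalue, add_comm]

theorem thermal_relative_entropy_closed_form_le {s lam : ℝ} (hs : 1 < s) (hlam : 1 ≤ lam) :
    log ((lam * s + 1) / (s + 1)) + (s - 1) / 2 * log (thermalRatio s / thermalRatio (lam * s))
      ≤ log ((1 + lam) / 2) := by
  have hls : 1 < lam * s := by nlinarith
  set x := thermalRatio s / thermalRatio (lam * s) with hx
  set y := 2 * (lam * s + 1) / ((1 + lam) * (s + 1)) with hy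
  have hx0 : 0 < x := div_pos (thermalRatio_pos hs) (thermalRatio_pos hls)
  have hy0 : 0 < y := by positivity
  have hsplit : log ((lam * s + 1) / (s + 1)) = log ((1 + lam) / 2) + log y := by
    rw [← log_mul (by positivity) hy0.ne', hy]
    congr 1
    field_simp
  have hpoly : (s - 1) / 2 * (x - 1) + (y - 1) ≤ 0 := by
    have hls1 : 0 < lam * s - 1 := by linarith
    have hexpr : (s - 1) / 2 * (x - 1) + (y - 1)
        = -((s - 1) * (lam - 1) / ((1 + lam) * (lam * s - 1))) := by
      have : s * lam - 1 ≠ 0 := by linarith [mul_comm s lam]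
      have : s + 1 ≠ 0 := by positivity
      have : 1 + lam ≠ 0 := by positivity
      rw [hx, hy, thermalRatio, thermalRatio]
      field_simp
      ring
    rw [hexpr, neg_nonpos]
    have : 0 ≤ lam - 1 := by linarith
    have : 0 ≤ s - 1 := by linarith
    positivity
  have hlogx := mul_le_mul_of_nonneg_left (log_le_sub_one_of_pos hx0)
    (by linarith : 0 ≤ (s - 1) / 2)
  linarith [log_le_sub_one_of_pos hy0]

/-- For `s, λ ≥ 1`, the Kullback–Leibler divergence between `μ_•(s)` and
`μ_•(λs)` is at most `log((1+λ)/2)`, with equality at `s = 1`. (Terms with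
`μ_ℓ(s) = 0` vanish, as `0 * log(0/0) = 0` in Lean.) -/
theorem thermal_relative_entropy_le (s lam : ℝ) (hs : 1 ≤ s) (hlam : 1 ≤ lam) :
    (∑' ℓ : ℕ, thermalEigenvalue s ℓ *
          Real.log (thermalEigenvalue s ℓ / thermalEigenvalue (lam * s) ℓ)
        ≤ Real.log ((1 + lam) / 2))
    ∧ (s = 1 →
      ∑' ℓ : ℕ, thermalEigenvalue s ℓ *
          Real.log (thermalEigenvalue s ℓ / thermalEigenvalue (lam * s) ℓ)
        = Real.log ((1 + lam) / 2)) := by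
  rcases hs.eq_or_lt with rfl | hs
  · rw [mul_one]
    have hone := tsum_thermalEigenvalue_one_mul_log_div lam
    exact ⟨hone.le, fun _ => hone⟩
  · refine ⟨?_, fun h => absurd h hs.ne'⟩
    rw [(hasSum_thermalEigenvalue_mul_log_div hs (by nlinarith)).tsum_eq]
    exact thermal_relative_entropy_closed_form_le hs hlam
end
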